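/- Let 0 < κ ≤ λ and let J be an ordered partition of {1,…,q}. For every point c ∈ relint(λ·τ_J), the metric projection π_κ(c) of c onto κ·P^{q−1} lies in the face κ·τ_J. -/

import Mathlib

open Set Pointwise

noncomputable section

/-- The vertex `P_ρ` of the permutohedron: the point whose `ρ(k)`-th coordinate is
`k − (q+1)/2` (with `k` running through `1,…,q`, here 0-indexed as `Fin q`). -/
def vertexPoint (q : ℕ) (ρ : Equiv.Perm (Fin q)) : EuclideanSpace ℝ (Fin q) :=
  WithLp.toLp 2 (fun i => ((ρ.symm i : ℕ) + 1 : ℝ) - ((q : ℝ) + 1) / 2)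

/-- The permutohedron `P^{q−1} ⊂ ℝ^q`: the convex hull of the points `P_ρ`. -/
def permutohedron (q : ℕ) : Set (EuclideanSpace ℝ (Fin q)) :=
  convexHull ℝ (Set.range (vertexPoint q))

/-- An ordered partition `J = (J_1,…,J_s)` of `{1,…,q}` into `s` nonempty subsets. -/
structure OrderedPartition (q s : ℕ) where
  blocks : Fin s → Finset (Fin q)
  nonempty : ∀ k, (blocks k).Nonempty
  disjoint : ∀ k l, k ≠ l → Disjoint (blocks k) (blocks l)
  covers : ∀ j : Fin q, ∃ k, j ∈ blocks k

/-- `cumCard J n = r_n`, the total cardinality of the first `n` blocks. -/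
def cumCard {q s : ℕ} (J : OrderedPartition q s) (n : ℕ) : ℕ :=
  ∑ i ∈ Finset.univ.filter (fun i : Fin s => (i : ℕ) < n), (J.blocks i).card

/-- A permutation `π` is compatible with the ordered partition `J` if it maps the
`k`-th consecutive block `{r_{k−1}+1,…,r_k}` (0-indexed: `[r_{k−1}, r_k)`) onto `J_k`;
these are exactly the permutations `σρ` with `σ` in the Young subgroup. -/
def compatiblePerm {q s : ℕ} (J : OrderedPartition q s) (π : Equiv.Perm (Fin q)) : Prop :=
  ∀ (k : Fin s) (i : Fin q),
    π i ∈ J.blocks k ↔ cumCard J (k : ℕ) ≤ (i : ℕ) ∧ (i : ℕ) < cumCard J ((k : ℕ) + 1)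

/-- The face `τ_J` of the permutohedron corresponding to the ordered partition `J`. -/
def face (q s : ℕ) (J : OrderedPartition q s) : Set (EuclideanSpace ℝ (Fin q)) :=
  convexHull ℝ {x | ∃ π : Equiv.Perm (Fin q), compatiblePerm J π ∧ x = vertexPoint q π}

/-- The metric projection onto a set `K`: a point of `K` at minimal distance
(unique when `K` is compact, convex and nonempty in Euclidean space). -/
def metricProj {E : Type*} [MetricSpace E] [Nonempty E] (K : Set E) (c : E) : E :=
  Classical.epsilon fun y => y ∈ K ∧ ∀ z ∈ K, dist c y ≤ dist c z

/-!
Write the projection as `κ • y₀` with `y₀ ∈ P = P^{q−1}` and `c = λ • c₀` with `c₀ ∈ τ_J`; the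
variational inequality says that `y₀` maximises `⟪d, ·⟫` on `P`, where `d = λc₀ − κy₀`.

On `P` every sum of `m` coordinates is at most `m(q − m)/2`. A vertex maximising `⟪d, ·⟫` orders
its coordinates like `d` (otherwise a transposition increases `⟪d, ·⟫`), so it attains this bound
on every upper level set `L` of `d`, and so does `y₀`, a convex combination of such vertices. With
`Σ_L c₀ ≤ |L|(q − |L|)/2` this gives `Σ_L d ≤ (λ − κ)|L|(q − |L|)/2`, and since `m ↦ m(q − m)/2`
is concave the bound extends from level sets to all sets. On the unions `S_t` of the last blocks
of `J`, where `c₀` attains the bound, this forces `y₀` to attain it as well, and the points of `P`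
attaining the bound on every `S_t` are exactly those of `τ_J`.
-/

open Finset

theorem mem_convexHull_setOf_eq_of_convexOn {E : Type*} [AddCommGroup E] [Module ℝ E]
    {s : Set E} {f : E → ℝ} {M : ℝ} (hf : ConvexOn ℝ (convexHull ℝ s) f)
    (hfs : ∀ z ∈ s, f z ≤ M) {x : E} (hx : x ∈ convexHull ℝ s) (hfx : f x = M) :
    x ∈ convexHull ℝ {z ∈ s | f z = M} := by
  let C := {x ∈ convexHull ℝ s | f x ≤ M ∧ (f x = M → x ∈ convexHull ℝ {z ∈ s | f z = M})}
  suffices convexHull ℝ s ⊆ C from (this hx).2.2 hfx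
  refine convexHull_min (fun z hz => ⟨subset_convexHull ℝ s hz, hfs z hz,
    fun h => subset_convexHull ℝ _ ⟨hz, h⟩⟩) ?_
  rintro x ⟨hxs, hxM, hxT⟩ y ⟨hys, hyM, hyT⟩ a b ha hb hab
  have hjensen : f (a • x + b • y) ≤ a * f x + b * f y := hf.2 hxs hys ha hb hab
  have hxM' := mul_le_mul_of_nonneg_left hxM ha
  have hyM' := mul_le_mul_of_nonneg_left hyM hb
  have hM : a * M + b * M = M := by rw [← add_mul, hab, one_mul]
  refine ⟨convex_convexHull ℝ s hxs hys ha hb hab, by linarith, fun h => ?_⟩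
  rcases ha.eq_or_lt with rfl | ha
  · obtain rfl : b = 1 := by simpa using hab
    simp only [zero_smul, one_smul, zero_add] at h ⊢
    exact hyT h
  rcases hb.eq_or_lt with rfl | hb
  · obtain rfl : a = 1 := by simpa using hab
    simp only [zero_smul, one_smul, add_zero] at h ⊢
    exact hxT h
  have hx : f x = M := le_antisymm hxM <| by
    by_contra! hlt
    linarith [mul_lt_mul_of_pos_left hlt ha]
  have hy : f y = M := le_antisymm hyM <| by
    by_contra! hlt
    linarith [mul_lt_mul_of_pos_left hlt hb]
  exact convex_convexHull ℝ _ (hxT hx) (hyT hy) ha.le hb.le hab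

theorem ConcaveOn.affine_le_of_le_of_le {s : Set ℝ} {φ : ℝ → ℝ} (hφ : ConcaveOn ℝ s φ)
    {u v x a θ : ℝ} (hu : u ∈ s) (hv : v ∈ s) (hux : u ≤ x) (hxv : x ≤ v)
    (hau : a ≤ φ u) (hav : a + (v - u) * θ ≤ φ v) : a + (x - u) * θ ≤ φ x := by
  rcases hux.eq_or_lt with rfl | hux'
  · simpa using hau
  have hvu : 0 < v - u := by linarith
  have hvu' : v - u ≠ 0 := hvu.ne'
  have hcomb := hφ.2 hu hv (div_nonneg (sub_nonneg.mpr hxv) hvu.le)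
    (div_nonneg (sub_nonneg.mpr hux) hvu.le) (by field_simp; ring)
  have hpt : ((v - x) / (v - u)) • u + ((x - u) / (v - u)) • v = x := by
    simp only [smul_eq_mul]; field_simp; ring
  rw [hpt, smul_eq_mul, smul_eq_mul] at hcomb
  have h1 := mul_le_mul_of_nonneg_left hau (div_nonneg (sub_nonneg.mpr hxv) hvu.le)
  have h2 := mul_le_mul_of_nonneg_left hav (div_nonneg (sub_nonneg.mpr hux) hvu.le)
  have hid : (v - x) / (v - u) * a + (x - u) / (v - u) * (a + (v - u) * θ)
      = a + (x - u) * θ := by field_simp; ring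
  linarith

section UpperLevelSets

variable {ι α : Type*}

/-- For real-valued `f` on a finite type these are exactly the sets `{i | θ ≤ f i}`. -/
def IsUpperLevelSet [LT α] (f : ι → α) (L : Finset ι) : Prop :=
  ∀ i ∈ L, ∀ j ∉ L, f j < f i

theorem IsUpperLevelSet.eq_of_card_eq [Preorder α] {f : ι → α} {T U : Finset ι}
    (hT : IsUpperLevelSet f T) (hU : IsUpperLevelSet f U) (hcard : #T = #U) : T = U := by
  suffices T ⊆ U from eq_of_subset_of_card_le this hcard.ge
  intro t ht
  by_contra htU
  have hUT : U ⊆ T := fun u hu => by_contra fun huT => lt_asymm (hT t ht u huT) (hU u hu t htU)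
  exact htU (eq_of_subset_of_card_le hUT hcard.le ▸ ht)

theorem sum_le_sum_of_card_eq_of_forall_le {A B : Finset ι} {e : ι → ℝ} (hcard : #A = #B)
    (h : ∀ a ∈ A, ∀ b ∈ B, e a ≤ e b) : ∑ a ∈ A, e a ≤ ∑ b ∈ B, e b := by
  rcases B.eq_empty_or_nonempty with rfl | hB
  · simp [card_eq_zero.mp hcard]
  obtain ⟨b₀, hb₀, hmin⟩ := B.exists_min_image e hB
  calc ∑ a ∈ A, e a ≤ #A • e b₀ := sum_le_card_nsmul _ _ _ fun a ha => h a ha b₀ hb₀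
    _ = #B • e b₀ := by rw [hcard]
    _ ≤ ∑ b ∈ B, e b := card_nsmul_le_sum _ _ _ hmin

theorem IsUpperLevelSet.sum_le_sum_of_card_eq [LinearOrder ι] {U T : Finset ι} {e : ι → ℝ}
    (hU : IsUpperLevelSet id U) (he : Monotone e) (hcard : #T = #U) :
    ∑ i ∈ T, e i ≤ ∑ i ∈ U, e i := by
  have hsdiff : #(T \ U) = #(U \ T) := by
    have := card_sdiff_add_card_inter T U
    have := card_sdiff_add_card_inter U T
    rw [Finset.inter_comm] at this
    omega
  have hlt : ∑ i ∈ T \ U, e i ≤ ∑ i ∈ U \ T, e i :=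
    sum_le_sum_of_card_eq_of_forall_le hsdiff fun a ha b hb =>
      he (hU b (mem_sdiff.mp hb).1 a (mem_sdiff.mp ha).2).le
  rw [← sum_inter_add_sum_sdiff T U, ← sum_inter_add_sum_sdiff U T, Finset.inter_comm]
  linarith

theorem exists_card_lt_le_card_le [Fintype ι] [LinearOrder α] (d : ι → α) {m : ℕ} (hm0 : 0 < m)
    (hm : m ≤ Fintype.card ι) : ∃ θ, #{i | θ < d i} ≤ m ∧ m ≤ #{i | θ ≤ d i} := by
  have hne : ({j | m ≤ #{i | d j ≤ d i}} : Finset ι).Nonempty := by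
    have : Nonempty ι := Fintype.card_pos_iff.mp (hm0.trans_le hm)
    obtain ⟨j, -, hj⟩ := univ.exists_min_image d univ_nonempty
    exact ⟨j, by simpa [filter_true_of_mem fun i _ => hj i (mem_univ i)] using hm⟩
  obtain ⟨j, hjm, hjmax⟩ := exists_max_image _ d hne
  refine ⟨d j, ?_, (mem_filter.mp hjm).2⟩
  by_contra! hlt
  obtain ⟨j', hj', hj'min⟩ := exists_min_image ({i | d j < d i} : Finset ι) d
    (card_pos.mp (by omega))
  have hcard : m ≤ #{i | d j' ≤ d i} :=
    hlt.le.trans (card_le_card fun i hi => by simpa using hj'min i hi)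
  exact (mem_filter.mp hj').2.not_ge (hjmax j' (by simpa using hcard))

end UpperLevelSets

section LevelSetBound

variable {ι : Type*} [Fintype ι] (d : ι → ℝ) (θ : ℝ)

theorem isUpperLevelSet_filter_lt : IsUpperLevelSet d {i | θ < d i} := by
  intro i hi j hj
  simp only [mem_filter, Finset.mem_univ, true_and, not_lt] at hi hj
  linarith

theorem isUpperLevelSet_filter_le : IsUpperLevelSet d {i | θ ≤ d i} := by
  intro i hi j hj
  simp only [mem_filter, Finset.mem_univ, true_and, not_le] at hi hj
  linarith

theorem sum_le_sum_filter_lt_add (S : Finset ι) :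
    ∑ i ∈ S, d i ≤ ∑ i ∈ {i | θ < d i}, d i + ((#S : ℝ) - #{i | θ < d i}) * θ := by
  classical
  set U : Finset ι := {i | θ < d i}
  have hout : ∑ i ∈ S \ U, d i ≤ #(S \ U) • θ :=
    sum_le_card_nsmul _ _ _ fun i hi => by simpa [U] using (Finset.mem_sdiff.mp hi).2
  have hin : #(U \ S) • θ ≤ ∑ i ∈ U \ S, d i :=
    card_nsmul_le_sum _ _ _ fun i hi => by
      have := (Finset.mem_sdiff.mp hi).1
      simp only [U, mem_filter, Finset.mem_univ, true_and] at this
      exact this.le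
  have hS := card_sdiff_add_card_inter S U
  have hU := card_sdiff_add_card_inter U S
  rw [Finset.inter_comm] at hU
  rw [nsmul_eq_mul] at hout hin
  rw [← sum_inter_add_sum_sdiff S U, ← sum_inter_add_sum_sdiff U S, Finset.inter_comm U S,
    ← hS, ← hU]
  push_cast
  linarith

theorem sum_filter_le_eq_sum_filter_lt_add :
    ∑ i ∈ {i | θ ≤ d i}, d i
      = ∑ i ∈ {i | θ < d i}, d i + ((#{i | θ ≤ d i} : ℝ) - #{i | θ < d i}) * θ := by
  classical
  have hUV : ({i | θ < d i} : Finset ι) ⊆ ({i | θ ≤ d i} : Finset ι) := fun i hi => by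
    simp only [mem_filter, Finset.mem_univ, true_and] at hi ⊢
    exact hi.le
  have hdiff : ∀ i ∈ ({i | θ ≤ d i} : Finset ι) \ ({i | θ < d i} : Finset ι), d i = θ := by
    intro i hi
    simp only [Finset.mem_sdiff, mem_filter, Finset.mem_univ, true_and, not_lt] at hi
    exact le_antisymm hi.2 hi.1
  rw [← sum_sdiff hUV, sum_congr rfl hdiff, sum_const, card_sdiff_of_subset hUV, nsmul_eq_mul,
    Nat.cast_sub (Finset.card_le_card hUV)]
  ring

variable {d}

/-- A general set is compared with the two level sets `{θ < d}` and `{θ ≤ d}` between whose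
cardinalities its own lies. -/
theorem sum_le_of_forall_isUpperLevelSet {φ : ℝ → ℝ}
    (hφ : ConcaveOn ℝ (Set.Icc (0 : ℝ) (Fintype.card ι)) φ)
    (h : ∀ L, IsUpperLevelSet d L → ∑ i ∈ L, d i ≤ φ #L) (S : Finset ι) :
    ∑ i ∈ S, d i ≤ φ #S := by
  rcases S.eq_empty_or_nonempty with rfl | hS
  · exact h ∅ fun i hi => absurd hi (notMem_empty i)
  obtain ⟨θ, hU, hV⟩ := exists_card_lt_le_card_le d (card_pos.mpr hS) (card_le_univ S)
  have hmem : ∀ L : Finset ι, (#L : ℝ) ∈ Set.Icc (0 : ℝ) (Fintype.card ι) := fun L =>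
    ⟨Nat.cast_nonneg _, Nat.cast_le.mpr (card_le_univ L)⟩
  have hUφ := h _ (isUpperLevelSet_filter_lt d θ)
  have hVφ := h _ (isUpperLevelSet_filter_le d θ)
  rw [sum_filter_le_eq_sum_filter_lt_add] at hVφ
  exact (sum_le_sum_filter_lt_add d θ S).trans <|
    hφ.affine_le_of_le_of_le (hmem _) (hmem _) (Nat.cast_le.mpr hU) (Nat.cast_le.mpr hV) hUφ hVφ

end LevelSetBound

section Vertices

variable {q : ℕ}

def positionsFrom (q a : ℕ) : Finset (Fin q) := {k | a ≤ (k : ℕ)}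

theorem positionsFrom_eq_insert {a : ℕ} (ha : a < q) :
    positionsFrom q a = insert ⟨a, ha⟩ (positionsFrom q (a + 1)) := by
  ext k
  simp only [positionsFrom, mem_filter, Finset.mem_univ, true_and, Finset.mem_insert, Fin.ext_iff]
  omega

theorem notMem_positionsFrom_succ {a : ℕ} (ha : a < q) :
    (⟨a, ha⟩ : Fin q) ∉ positionsFrom q (a + 1) := by
  simp [positionsFrom]

theorem positionsFrom_self : positionsFrom q q = ∅ := by
  ext k
  simp [positionsFrom]

theorem card_positionsFrom {a : ℕ} (ha : a ≤ q) : #(positionsFrom q a) = q - a := by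
  induction ha using Nat.decreasingInduction with
  | self => simp [positionsFrom_self]
  | of_succ a ha ih =>
    rw [positionsFrom_eq_insert ha, card_insert_of_notMem (notMem_positionsFrom_succ ha), ih]
    omega

theorem isUpperLevelSet_positionsFrom (a : ℕ) : IsUpperLevelSet id (positionsFrom q a) := by
  intro k hk j hj
  simp only [positionsFrom, mem_filter, Finset.mem_univ, true_and, not_le] at hk hj
  exact Fin.lt_def.mpr (hj.trans_le hk)

/-- The vertex `P_ρ` carries this coordinate at `ρ k`. -/
def vertexCoord (q : ℕ) (k : Fin q) : ℝ := ((k : ℕ) + 1 : ℝ) - ((q : ℝ) + 1) / 2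

theorem vertexPoint_apply (ρ : Equiv.Perm (Fin q)) (i : Fin q) :
    vertexPoint q ρ i = vertexCoord q (ρ.symm i) := rfl

theorem vertexCoord_strictMono : StrictMono (vertexCoord q) := fun k j hkj => by
  simpa [vertexCoord] using hkj

theorem sum_vertexCoord_positionsFrom {a : ℕ} (ha : a ≤ q) :
    ∑ k ∈ positionsFrom q a, vertexCoord q k = a * (q - a) / 2 := by
  induction ha using Nat.decreasingInduction with
  | self => simp [positionsFrom_self]
  | of_succ a ha ih =>
    rw [positionsFrom_eq_insert ha, sum_insert (notMem_positionsFrom_succ ha), ih, vertexCoord]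
    push_cast
    ring

/-- The largest value of a sum of `m` coordinates on the permutohedron. -/
def maxPartialSum (q : ℕ) (m : ℝ) : ℝ := m * (q - m) / 2

theorem sum_vertexCoord_positionsFrom_sub {m : ℕ} (hm : m ≤ q) :
    ∑ k ∈ positionsFrom q (q - m), vertexCoord q k = maxPartialSum q m := by
  rw [sum_vertexCoord_positionsFrom (Nat.sub_le _ _), Nat.cast_sub hm, maxPartialSum]
  ring

theorem concaveOn_maxPartialSum (q : ℕ) : ConcaveOn ℝ Set.univ (maxPartialSum q) := by
  refine ⟨convex_univ, fun x _ y _ a b ha hb hab => ?_⟩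
  obtain rfl : b = 1 - a := by linarith
  simp only [maxPartialSum, smul_eq_mul]
  nlinarith [mul_nonneg ha hb, sq_nonneg (x - y)]

theorem sum_vertexPoint_eq_sum_map (ρ : Equiv.Perm (Fin q)) (L : Finset (Fin q)) :
    ∑ i ∈ L, vertexPoint q ρ i = ∑ k ∈ L.map ρ.symm.toEmbedding, vertexCoord q k := by
  rw [sum_map]
  rfl

theorem sum_vertexPoint_le (ρ : Equiv.Perm (Fin q)) (L : Finset (Fin q)) :
    ∑ i ∈ L, vertexPoint q ρ i ≤ maxPartialSum q #L := by
  have hLq : #L ≤ q := by simpa using card_le_univ L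
  have hcard : #(L.map ρ.symm.toEmbedding) = #(positionsFrom q (q - #L)) := by
    rw [card_map, card_positionsFrom (Nat.sub_le _ _)]
    omega
  calc ∑ i ∈ L, vertexPoint q ρ i
      ≤ ∑ k ∈ positionsFrom q (q - #L), vertexCoord q k := by
        rw [sum_vertexPoint_eq_sum_map]
        exact (isUpperLevelSet_positionsFrom _).sum_le_sum_of_card_eq
          vertexCoord_strictMono.monotone hcard
    _ = maxPartialSum q #L := sum_vertexCoord_positionsFrom_sub hLq

theorem IsUpperLevelSet.map_symm_eq_positionsFrom {ρ : Equiv.Perm (Fin q)} {L : Finset (Fin q)}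
    (hL : IsUpperLevelSet ρ.symm L) : L.map ρ.symm.toEmbedding = positionsFrom q (q - #L) := by
  have hLq : #L ≤ q := by simpa using card_le_univ L
  refine IsUpperLevelSet.eq_of_card_eq (f := id) ?_ (isUpperLevelSet_positionsFrom _) ?_
  · intro k hk j hj
    rw [mem_map_equiv] at hk hj
    simpa using hL _ hk _ hj
  · rw [card_map, card_positionsFrom (Nat.sub_le _ _)]
    omega

theorem sum_vertexPoint_eq_of_isUpperLevelSet {ρ : Equiv.Perm (Fin q)} {L : Finset (Fin q)}
    (hL : IsUpperLevelSet ρ.symm L) : ∑ i ∈ L, vertexPoint q ρ i = maxPartialSum q #L := by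
  rw [sum_vertexPoint_eq_sum_map, hL.map_symm_eq_positionsFrom,
    sum_vertexCoord_positionsFrom_sub (by simpa using card_le_univ L)]

theorem isUpperLevelSet_of_sum_vertexPoint_eq {ρ : Equiv.Perm (Fin q)} {L : Finset (Fin q)}
    (h : ∑ i ∈ L, vertexPoint q ρ i = maxPartialSum q #L) : IsUpperLevelSet ρ.symm L := by
  intro i hi j hj
  by_contra! hle
  have hij : ρ.symm i < ρ.symm j :=
    hle.lt_of_ne fun h' => hj (ρ.symm.injective h' ▸ hi)
  -- exchanging `i` for `j` in `L` would push the sum above its maximum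
  have hjL : j ∉ L.erase i := fun h' => hj (mem_of_mem_erase h')
  have hcard : #(insert j (L.erase i)) = #L := by
    rw [card_insert_of_notMem hjL, card_erase_add_one hi]
  have hle' := sum_vertexPoint_le ρ (insert j (L.erase i))
  rw [sum_insert hjL, sum_erase_eq_sub hi, hcard, ← h] at hle'
  have hv : vertexPoint q ρ i < vertexPoint q ρ j := vertexCoord_strictMono hij
  linarith

theorem inner_vertexPoint_swap_mul_sub (d : EuclideanSpace ℝ (Fin q)) (ρ : Equiv.Perm (Fin q))
    {i j : Fin q} (hij : i ≠ j) :
    inner ℝ d (vertexPoint q (Equiv.swap i j * ρ)) - inner ℝ d (vertexPoint q ρ)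
      = (d i - d j) * (vertexPoint q ρ j - vertexPoint q ρ i) := by
  have hswap : ∀ x, vertexPoint q (Equiv.swap i j * ρ) x = vertexPoint q ρ (Equiv.swap i j x) :=
    fun x => by simp [vertexPoint_apply, Equiv.Perm.mul_def]
  simp only [PiLp.inner_apply, RCLike.inner_apply, conj_trivial, hswap, ← sum_sub_distrib]
  rw [sum_eq_add i j hij (fun x _ hx => by simp [Equiv.swap_apply_of_ne_of_ne hx.1 hx.2])
    (by simp) (by simp)]
  simp only [Equiv.swap_apply_left, Equiv.swap_apply_right]
  ring

theorem isUpperLevelSet_symm_of_forall_inner_le {d : EuclideanSpace ℝ (Fin q)}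
    {ρ : Equiv.Perm (Fin q)}
    (hρ : ∀ π, inner ℝ d (vertexPoint q π) ≤ inner ℝ d (vertexPoint q ρ)) {L : Finset (Fin q)}
    (hL : IsUpperLevelSet d L) : IsUpperLevelSet ρ.symm L := by
  intro i hi j hj
  by_contra! hle
  have hij : i ≠ j := fun h => hj (h ▸ hi)
  have hlt : ρ.symm i < ρ.symm j := hle.lt_of_ne fun h => hij (ρ.symm.injective h)
  have hd : 0 < d i - d j := sub_pos.mpr (hL i hi j hj)
  have hv : 0 < vertexPoint q ρ j - vertexPoint q ρ i := sub_pos.mpr (vertexCoord_strictMono hlt)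
  linarith [hρ (Equiv.swap i j * ρ), inner_vertexPoint_swap_mul_sub d ρ hij, mul_pos hd hv]

end Vertices

section Permutohedron

variable {q : ℕ}

def coordSum (L : Finset (Fin q)) : EuclideanSpace ℝ (Fin q) →ₗ[ℝ] ℝ where
  toFun x := ∑ i ∈ L, x i
  map_add' x y := by simp [sum_add_distrib]
  map_smul' r x := by simp [mul_sum]

@[simp]
theorem coordSum_apply (L : Finset (Fin q)) (x : EuclideanSpace ℝ (Fin q)) :
    coordSum L x = ∑ i ∈ L, x i := rfl

theorem sum_le_maxPartialSum_of_mem_permutohedron {x : EuclideanSpace ℝ (Fin q)}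
    (hx : x ∈ permutohedron q) (L : Finset (Fin q)) : ∑ i ∈ L, x i ≤ maxPartialSum q #L :=
  convexHull_min (by rintro _ ⟨ρ, rfl⟩; exact sum_vertexPoint_le ρ L)
    (convex_halfSpace_le (coordSum L).isLinear _) hx

theorem sum_eq_maxPartialSum_of_isMaxOn {d y : EuclideanSpace ℝ (Fin q)}
    (hy : y ∈ permutohedron q) (hmax : IsMaxOn (inner ℝ d) (permutohedron q) y)
    {L : Finset (Fin q)} (hL : IsUpperLevelSet d L) : ∑ i ∈ L, y i = maxPartialSum q #L := by
  have hvert : ∀ π, inner ℝ d (vertexPoint q π) ≤ inner ℝ d y := fun π =>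
    isMaxOn_iff.mp hmax _ (subset_convexHull ℝ _ ⟨π, rfl⟩)
  have hy' := mem_convexHull_setOf_eq_of_convexOn (f := inner ℝ d)
    ((innerₛₗ ℝ d).convexOn (convex_convexHull ℝ _)) (by rintro _ ⟨π, rfl⟩; exact hvert π) hy rfl
  refine convexHull_min ?_ (convex_hyperplane (coordSum L).isLinear _) hy'
  rintro _ ⟨⟨ρ, rfl⟩, hρ⟩
  exact sum_vertexPoint_eq_of_isUpperLevelSet
    (isUpperLevelSet_symm_of_forall_inner_le (fun π => hρ ▸ hvert π) hL)

end Permutohedron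

namespace OrderedPartition

variable {q s : ℕ} (J : OrderedPartition q s)

/-- In the paper's 1-indexed notation, `J_{t+1} ∪ ⋯ ∪ J_s`. -/
def suffixSet (t : ℕ) : Finset (Fin q) := {i | ∃ k : Fin s, t ≤ k ∧ i ∈ J.blocks k}

theorem eq_of_mem_blocks {i : Fin q} {k l : Fin s} (hk : i ∈ J.blocks k) (hl : i ∈ J.blocks l) :
    k = l :=
  by_contra fun h => Finset.disjoint_left.mp (J.disjoint k l h) hk hl

theorem mem_suffixSet_iff_of_mem_blocks {i : Fin q} {k : Fin s} (hk : i ∈ J.blocks k) (t : ℕ) :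
    i ∈ J.suffixSet t ↔ t ≤ k := by
  simp only [suffixSet, mem_filter, Finset.mem_univ, true_and]
  exact ⟨fun ⟨l, hl, hil⟩ => J.eq_of_mem_blocks hil hk ▸ hl, fun h => ⟨k, h, hk⟩⟩

theorem mem_blocks_iff (k : Fin s) (i : Fin q) :
    i ∈ J.blocks k ↔ i ∈ J.suffixSet k ∧ i ∉ J.suffixSet (k + 1) := by
  obtain ⟨l, hl⟩ := J.covers i
  rw [J.mem_suffixSet_iff_of_mem_blocks hl, J.mem_suffixSet_iff_of_mem_blocks hl]
  constructor
  · intro hk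
    obtain rfl := J.eq_of_mem_blocks hk hl
    omega
  · intro h
    obtain rfl : l = k := Fin.ext (by omega)
    exact hl

theorem cumCard_mono : Monotone (cumCard J) := fun t t' h =>
  sum_le_sum_of_subset fun k hk => by
    simp only [mem_filter, Finset.mem_univ, true_and] at hk ⊢
    omega

theorem sum_card_blocks : ∑ k, #(J.blocks k) = q := by
  rw [← card_biUnion fun k _ l _ hkl => J.disjoint k l hkl]
  convert Finset.card_fin q
  exact eq_univ_of_forall fun i => mem_biUnion.mpr ((J.covers i).imp fun k hk => ⟨mem_univ k, hk⟩)

theorem card_suffixSet (t : ℕ) : #(J.suffixSet t) = q - cumCard J t := by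
  have hsuffix : J.suffixSet t = ({k | t ≤ (k : ℕ)} : Finset (Fin s)).biUnion J.blocks := by
    ext i
    simp [suffixSet]
  have htot := J.sum_card_blocks
  rw [← sum_filter_add_sum_filter_not univ (fun k : Fin s => (k : ℕ) < t)] at htot
  simp only [not_lt] at htot
  rw [hsuffix, card_biUnion fun k _ l _ hkl => J.disjoint k l hkl, cumCard]
  omega

theorem cumCard_le (t : ℕ) : cumCard J t ≤ q :=
  calc cumCard J t ≤ ∑ k, #(J.blocks k) := sum_le_sum_of_subset (filter_subset _ _)
    _ = q := J.sum_card_blocks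

theorem mem_suffixSet_iff_of_compatiblePerm {π : Equiv.Perm (Fin q)} (hπ : compatiblePerm J π)
    (t : ℕ) (i : Fin q) : i ∈ J.suffixSet t ↔ cumCard J t ≤ π.symm i := by
  obtain ⟨k, hk⟩ := J.covers i
  have hpos := (hπ k (π.symm i)).mp (by simpa using hk)
  rw [J.mem_suffixSet_iff_of_mem_blocks hk]
  constructor
  · exact fun h => (J.cumCard_mono h).trans hpos.1
  · intro h
    by_contra! hlt
    have := J.cumCard_mono (show (k : ℕ) + 1 ≤ t by omega)
    omega

theorem isUpperLevelSet_suffixSet_of_compatiblePerm {π : Equiv.Perm (Fin q)}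
    (hπ : compatiblePerm J π) (t : ℕ) :
    IsUpperLevelSet π.symm (J.suffixSet t) := by
  intro i hi j hj
  rw [J.mem_suffixSet_iff_of_compatiblePerm hπ] at hi hj
  exact Fin.lt_def.mpr (by omega)

theorem compatiblePerm_of_forall_isUpperLevelSet_suffixSet {ρ : Equiv.Perm (Fin q)}
    (h : ∀ t ≤ s, IsUpperLevelSet ρ.symm (J.suffixSet t)) : compatiblePerm J ρ := by
  have hpos : ∀ t ≤ s, ∀ j : Fin q, ρ j ∈ J.suffixSet t ↔ cumCard J t ≤ j := by
    intro t ht j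
    have hmap := (h t ht).map_symm_eq_positionsFrom
    rw [J.card_suffixSet, Nat.sub_sub_self (J.cumCard_le t)] at hmap
    simpa [mem_map_equiv, positionsFrom] using congrArg (j ∈ ·) hmap
  intro k j
  rw [J.mem_blocks_iff, hpos k k.isLt.le, hpos (k + 1) k.isLt]
  omega

end OrderedPartition

theorem face_subset_permutohedron {q s : ℕ} (J : OrderedPartition q s) :
    face q s J ⊆ permutohedron q :=
  convexHull_mono (by rintro _ ⟨π, -, rfl⟩; exact ⟨π, rfl⟩)

theorem sum_suffixSet_eq_of_mem_face {q s : ℕ} {J : OrderedPartition q s}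
    {x : EuclideanSpace ℝ (Fin q)} (hx : x ∈ face q s J) (t : ℕ) :
    ∑ i ∈ J.suffixSet t, x i = maxPartialSum q #(J.suffixSet t) :=
  convexHull_min
    (by
      rintro _ ⟨π, hπ, rfl⟩
      exact sum_vertexPoint_eq_of_isUpperLevelSet
        (J.isUpperLevelSet_suffixSet_of_compatiblePerm hπ t))
    (convex_hyperplane (coordSum (J.suffixSet t)).isLinear _) hx

theorem mem_face_of_sum_suffixSet_eq {q s : ℕ} {J : OrderedPartition q s}
    {x : EuclideanSpace ℝ (Fin q)} (hx : x ∈ permutohedron q)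
    (h : ∀ t ≤ s, ∑ i ∈ J.suffixSet t, x i = maxPartialSum q #(J.suffixSet t)) :
    x ∈ face q s J := by
  let f := ∑ t ∈ Finset.range (s + 1), coordSum (J.suffixSet t)
  let M := ∑ t ∈ Finset.range (s + 1), maxPartialSum q #(J.suffixSet t)
  have hle : ∀ ρ, f (vertexPoint q ρ) ≤ M := fun ρ => by
    simpa [f, M] using sum_le_sum fun t _ => sum_vertexPoint_le ρ (J.suffixSet t)
  have hx' := mem_convexHull_setOf_eq_of_convexOn (f.convexOn (convex_convexHull ℝ _))
    (by rintro _ ⟨ρ, rfl⟩; exact hle ρ) hx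
    (by simpa [f, M] using sum_congr rfl fun t ht => h t (Nat.lt_succ_iff.mp (mem_range.mp ht)))
  refine convexHull_mono ?_ hx'
  rintro _ ⟨⟨ρ, rfl⟩, hρ⟩
  refine ⟨ρ, J.compatiblePerm_of_forall_isUpperLevelSet_suffixSet fun t ht => ?_, rfl⟩
  refine isUpperLevelSet_of_sum_vertexPoint_eq ?_
  simp only [f, M, LinearMap.sum_apply, coordSum_apply] at hρ
  exact (sum_eq_sum_iff_of_le fun t _ => sum_vertexPoint_le ρ _).mp hρ t
    (mem_range.mpr (Nat.lt_succ_of_le ht))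

theorem metricProj_mem_and_isMinOn {E : Type*} [MetricSpace E] [Nonempty E] {K : Set E}
    (hK : IsCompact K) (hne : K.Nonempty) (c : E) :
    metricProj K c ∈ K ∧ IsMinOn (dist c) K (metricProj K c) := by
  obtain ⟨y, hy, hmin⟩ := hK.exists_isMinOn hne (continuous_const.dist continuous_id).continuousOn
  exact (Classical.epsilon_spec (p := fun y => y ∈ K ∧ ∀ z ∈ K, dist c y ≤ dist c z)
    ⟨y, hy, isMinOn_iff.mp hmin⟩).imp_right isMinOn_iff.mpr

theorem inner_sub_metricProj_sub_nonpos {F : Type*} [NormedAddCommGroup F] [InnerProductSpace ℝ F]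
    {K : Set F} (hK : IsCompact K) (hconv : Convex ℝ K) (hne : K.Nonempty) (c : F) :
    ∀ x ∈ K, inner ℝ (c - metricProj K c) (x - metricProj K c) ≤ 0 := by
  obtain ⟨hy, hmin⟩ := metricProj_mem_and_isMinOn hK hne c
  refine (norm_eq_iInf_iff_real_inner_le_zero hconv hy).mp ?_
  have : Nonempty K := ⟨⟨_, hy⟩⟩
  refine le_antisymm (le_ciInf fun w => ?_)
    (ciInf_le ⟨0, by rintro _ ⟨w, rfl⟩; positivity⟩ (⟨_, hy⟩ : K))
  simpa [dist_eq_norm] using isMinOn_iff.mp hmin w w.2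

theorem sum_sub_le_of_isMaxOn {q : ℕ} {κ lam : ℝ} {c y : EuclideanSpace ℝ (Fin q)}
    (hc : c ∈ permutohedron q) (hy : y ∈ permutohedron q) (hlam : 0 ≤ lam) (hκlam : κ ≤ lam)
    (hmax : IsMaxOn (inner ℝ (lam • c - κ • y)) (permutohedron q) y) (S : Finset (Fin q)) :
    ∑ i ∈ S, (lam • c - κ • y) i ≤ (lam - κ) * maxPartialSum q #S := by
  have hφ : ConcaveOn ℝ (Set.Icc (0 : ℝ) (Fintype.card (Fin q)))
      (fun m => (lam - κ) * maxPartialSum q m) :=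
    ((concaveOn_maxPartialSum q).smul (sub_nonneg.mpr hκlam)).subset (Set.subset_univ _)
      (convex_Icc _ _)
  refine sum_le_of_forall_isUpperLevelSet hφ (fun L hL => ?_) S
  have hcL := mul_le_mul_of_nonneg_left (sum_le_maxPartialSum_of_mem_permutohedron hc L) hlam
  have hyL := sum_eq_maxPartialSum_of_isMaxOn hy hmax hL
  simp only [PiLp.sub_apply, PiLp.smul_apply, smul_eq_mul, sum_sub_distrib, ← mul_sum, hyL]
  linarith

theorem exists_metricProj_smul_permutohedron {q : ℕ} {κ : ℝ} (hκ : 0 < κ)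
    (c : EuclideanSpace ℝ (Fin q)) :
    ∃ y ∈ permutohedron q, metricProj (κ • permutohedron q) c = κ • y ∧
      IsMaxOn (inner ℝ (c - κ • y)) (permutohedron q) y := by
  have hP : IsCompact (permutohedron q) := (finite_range (vertexPoint q)).isCompact_convexHull ℝ
  have hK : IsCompact (κ • permutohedron q) := by
    simpa only [Set.image_smul] using hP.image (continuous_const_smul κ)
  have hKne : (κ • permutohedron q).Nonempty :=
    ⟨_, smul_mem_smul_set (subset_convexHull ℝ _ ⟨1, rfl⟩)⟩
  have hvar := inner_sub_metricProj_sub_nonpos hK ((convex_convexHull ℝ _).smul κ) hKne c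
  obtain ⟨y, hy, hyc⟩ := mem_smul_set.mp (metricProj_mem_and_isMinOn hK hKne c).1
  refine ⟨y, hy, hyc.symm, isMaxOn_iff.mpr fun x hx => ?_⟩
  have := hvar _ (smul_mem_smul_set hx)
  rw [← hyc, ← smul_sub, inner_smul_right, inner_sub_right] at this
  nlinarith

theorem metricProj_mem_scaled_face_general (q s : ℕ)
    (κ lam : ℝ) (hκ : 0 < κ) (hκlam : κ ≤ lam)
    (J : OrderedPartition q s) (c : EuclideanSpace ℝ (Fin q))
    (hc : c ∈ intrinsicInterior ℝ (lam • face q s J)) :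
    metricProj (κ • permutohedron q) c ∈ κ • face q s J := by
  obtain ⟨c₀, hc₀, rfl⟩ := mem_smul_set.mp (intrinsicInterior_subset hc)
  obtain ⟨y₀, hy₀, hy, hmax⟩ := exists_metricProj_smul_permutohedron hκ (lam • c₀)
  rw [hy]
  refine smul_mem_smul_set (mem_face_of_sum_suffixSet_eq hy₀ fun t _ =>
    le_antisymm (sum_le_maxPartialSum_of_mem_permutohedron hy₀ _) ?_)
  have hd := sum_sub_le_of_isMaxOn (face_subset_permutohedron J hc₀) hy₀
    (hκ.le.trans hκlam) hκlam hmax (J.suffixSet t)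
  simp only [PiLp.sub_apply, PiLp.smul_apply, smul_eq_mul, sum_sub_distrib, ← mul_sum,
    sum_suffixSet_eq_of_mem_face hc₀] at hd
  nlinarith

/-- for `0 < κ ≤ λ`, the metric projection onto `κ·P^{q−1}` of any point
of the relative interior of `λ·τ_J` lies in the face `κ·τ_J`. -/
theorem metricProj_mem_scaled_face (q s : ℕ) (hq : 1 ≤ q)
    (κ lam : ℝ) (hκ : 0 < κ) (hκlam : κ ≤ lam)
    (J : OrderedPartition q s) (c : EuclideanSpace ℝ (Fin q))
    (hc : c ∈ intrinsicInterior ℝ (lam • face q s J)) :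
    metricProj (κ • permutohedron q) c ∈ κ • face q s J :=
  metricProj_mem_scaled_face_general q s κ lam hκ hκlam J c hc

end
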